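/- (Theorem 2, Model Weight Divergence) Suppose ∇F is L-Lipschitz. Let w_fed^{t} = Σ_{c∈C_t} ζ_c^t w_c^{t,m} where each client runs m local steps w_c^{t,i} = w_c^{t,i-1} - η∇F̃_c(w_c^{t,i-1}) starting from w_c^{t,0} = w_fed^{t-1}, and let w_cen^{mt} be the result of m centralized gradient steps u ↦ u - η∇F(u) starting from w_cen^{m(t-1)}. Then ‖w_fed^{t} - w_cen^{mt}‖ ≤ (1+ηL)^m ‖w_fed^{t-1} - w_cen^{m(t-1)}‖ + Σ_{c∈C_t} ζ_c^t [ η Σ_{i=0}^{m-1} (1+ηL)^{m-1-i} G_c(w_c^{t,i}) ], where G_c(w) = ‖∇F̃_c(w) - ∇F(w)‖. -/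
import Mathlib


/-- Theorem 2 (Model Weight Divergence): after one FL round of `m` local steps per
client followed by weighted aggregation, compared with `m` centralized steps,
`‖w_fed^t - w_cen^{mt}‖ ≤ (1+ηL)^m ‖w_fed^{t-1} - w_cen^{m(t-1)}‖ +
  ∑_c ζ_c [η ∑_{i<m} (1+ηL)^{m-1-i} G_c(w_c^{t,i})]`. -/
theorem model_weight_divergence {n : ℕ} {ι : Type*} (Ct : Finset ι) (ζ : ι → ℝ)
    (F : EuclideanSpace ℝ (Fin n) → ℝ)
    (Ftilde : ι → EuclideanSpace ℝ (Fin n) → ℝ)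
    (gF : EuclideanSpace ℝ (Fin n) → EuclideanSpace ℝ (Fin n))
    (gFtilde : ι → EuclideanSpace ℝ (Fin n) → EuclideanSpace ℝ (Fin n))
    (L η : ℝ) (m : ℕ)
    (hdiffF : ∀ u, HasGradientAt F (gF u) u)
    (hdiffFt : ∀ c ∈ Ct, ∀ u, HasGradientAt (Ftilde c) (gFtilde c u) u)
    (hlip : ∀ u₁ u₂, ‖gF u₁ - gF u₂‖ ≤ L * ‖u₁ - u₂‖)
    (hζ : ∀ c ∈ Ct, 0 ≤ ζ c) (hsum : ∑ c ∈ Ct, ζ c = 1)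
    (hη : 0 < η) (hm : 1 ≤ m)
    (wfedPrev wcenPrev wfed : EuclideanSpace ℝ (Fin n))
    (W : ι → ℕ → EuclideanSpace ℝ (Fin n)) (U : ℕ → EuclideanSpace ℝ (Fin n))
    (hW0 : ∀ c ∈ Ct, W c 0 = wfedPrev)
    (hWrec : ∀ c ∈ Ct, ∀ i, W c (i + 1) = W c i - η • gFtilde c (W c i))
    (hU0 : U 0 = wcenPrev)
    (hUrec : ∀ j, U (j + 1) = U j - η • gF (U j))
    (hwfed : wfed = ∑ c ∈ Ct, ζ c • W c m) :
    ‖wfed - U m‖ ≤ (1 + η * L) ^ m * ‖wfedPrev - wcenPrev‖ +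
      ∑ c ∈ Ct, ζ c * (η * ∑ i ∈ Finset.range m,
        (1 + η * L) ^ (m - 1 - i) * ‖gFtilde c (W c i) - gF (W c i)‖) := by
  rcases Nat.eq_zero_or_pos n with hn | hn
  · -- trivial case: the space is a subsingleton
    subst hn
    haveI : Subsingleton (EuclideanSpace ℝ (Fin 0)) := by
      constructor; intro a b; ext i; exact absurd i.2 (Nat.not_lt_zero _)
    have hz : ∀ x y : EuclideanSpace ℝ (Fin 0), ‖x - y‖ = 0 := by
      intro x y; rw [Subsingleton.elim x y, sub_self, norm_zero]
    simp only [hz]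
    simp
  · -- nontrivial case: first get 0 ≤ L
    have hL : 0 ≤ L := by
      have hu : ‖(EuclideanSpace.single (⟨0, hn⟩ : Fin n) (1:ℝ)) - 0‖ = 1 := by
        simp [EuclideanSpace.norm_single]
      have := hlip (EuclideanSpace.single (⟨0, hn⟩ : Fin n) (1:ℝ)) 0
      rw [hu, mul_one] at this
      exact le_trans (norm_nonneg _) this
    have h1L : (0:ℝ) ≤ 1 + η * L := by positivity
    -- per-client recursion bound
    have key : ∀ c ∈ Ct, ∀ k, ‖W c k - U k‖ ≤
        (1 + η * L) ^ k * ‖wfedPrev - wcenPrev‖ +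
        η * ∑ i ∈ Finset.range k,
          (1 + η * L) ^ (k - 1 - i) * ‖gFtilde c (W c i) - gF (W c i)‖ := by
      intro c hc k
      induction k with
      | zero => simp [hW0 c hc, hU0]
      | succ k ih =>
        have hstep : ‖W c (k + 1) - U (k + 1)‖ ≤
            (1 + η * L) * ‖W c k - U k‖ +
            η * ‖gFtilde c (W c k) - gF (W c k)‖ := by
          rw [hWrec c hc k, hUrec k]
          have heq : W c k - η • gFtilde c (W c k) - (U k - η • gF (U k)) =
              (W c k - U k) - η • (gFtilde c (W c k) - gF (W c k))
                - η • (gF (W c k) - gF (U k)) := by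
            module
          rw [heq]
          have h1 : ‖(W c k - U k) - η • (gFtilde c (W c k) - gF (W c k))
                - η • (gF (W c k) - gF (U k))‖ ≤
              ‖W c k - U k‖ + ‖η • (gFtilde c (W c k) - gF (W c k))‖ +
                ‖η • (gF (W c k) - gF (U k))‖ :=
            le_trans (norm_sub_le _ _) (by gcongr; exact norm_sub_le _ _)
          have h2 : ‖η • (gFtilde c (W c k) - gF (W c k))‖ =
              η * ‖gFtilde c (W c k) - gF (W c k)‖ := by
            rw [norm_smul, Real.norm_of_nonneg hη.le]
          have h3 : ‖η • (gF (W c k) - gF (U k))‖ ≤ η * (L * ‖W c k - U k‖) := by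
            rw [norm_smul, Real.norm_of_nonneg hη.le]
            exact mul_le_mul_of_nonneg_left (hlip _ _) hη.le
          calc _ ≤ _ := h1
            _ ≤ ‖W c k - U k‖ + η * ‖gFtilde c (W c k) - gF (W c k)‖ +
                η * (L * ‖W c k - U k‖) := by rw [h2]; gcongr
            _ = (1 + η * L) * ‖W c k - U k‖ +
                η * ‖gFtilde c (W c k) - gF (W c k)‖ := by ring
        have hmul : (1 + η * L) * ‖W c k - U k‖ ≤ (1 + η * L) *
            ((1 + η * L) ^ k * ‖wfedPrev - wcenPrev‖ +
            η * ∑ i ∈ Finset.range k,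
              (1 + η * L) ^ (k - 1 - i) * ‖gFtilde c (W c i) - gF (W c i)‖) :=
          mul_le_mul_of_nonneg_left ih h1L
        have hsumrw : ∑ i ∈ Finset.range (k + 1),
            (1 + η * L) ^ (k + 1 - 1 - i) * ‖gFtilde c (W c i) - gF (W c i)‖ =
            (1 + η * L) * (∑ i ∈ Finset.range k,
              (1 + η * L) ^ (k - 1 - i) * ‖gFtilde c (W c i) - gF (W c i)‖) +
            ‖gFtilde c (W c k) - gF (W c k)‖ := by
          rw [Finset.sum_range_succ, Finset.mul_sum]
          congr 1
          · apply Finset.sum_congr rfl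
            intro i hi
            have hik : i < k := Finset.mem_range.mp hi
            have hpow : k + 1 - 1 - i = (k - 1 - i) + 1 := by omega
            rw [hpow, pow_succ]; ring
          · have : k + 1 - 1 - k = 0 := by omega
            rw [this, pow_zero, one_mul]
        calc ‖W c (k + 1) - U (k + 1)‖
            ≤ (1 + η * L) * ‖W c k - U k‖ +
              η * ‖gFtilde c (W c k) - gF (W c k)‖ := hstep
          _ ≤ (1 + η * L) *
              ((1 + η * L) ^ k * ‖wfedPrev - wcenPrev‖ +
              η * ∑ i ∈ Finset.range k,
                (1 + η * L) ^ (k - 1 - i) * ‖gFtilde c (W c i) - gF (W c i)‖) +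
              η * ‖gFtilde c (W c k) - gF (W c k)‖ := by gcongr
          _ = (1 + η * L) ^ (k + 1) * ‖wfedPrev - wcenPrev‖ +
              η * ∑ i ∈ Finset.range (k + 1),
                (1 + η * L) ^ (k + 1 - 1 - i) * ‖gFtilde c (W c i) - gF (W c i)‖ := by
            rw [hsumrw, pow_succ]; ring
    -- aggregation
    have hdiff : wfed - U m = ∑ c ∈ Ct, ζ c • (W c m - U m) := by
      have h1 : ∑ c ∈ Ct, ζ c • (W c m - U m)
          = (∑ c ∈ Ct, ζ c • W c m) - (∑ c ∈ Ct, ζ c) • U m := by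
        rw [Finset.sum_smul, ← Finset.sum_sub_distrib]
        exact Finset.sum_congr rfl fun c _ => smul_sub _ _ _
      rw [h1, hsum, one_smul, hwfed]
    calc ‖wfed - U m‖ = ‖∑ c ∈ Ct, ζ c • (W c m - U m)‖ := by rw [hdiff]
      _ ≤ ∑ c ∈ Ct, ‖ζ c • (W c m - U m)‖ := norm_sum_le _ _
      _ = ∑ c ∈ Ct, ζ c * ‖W c m - U m‖ := by
          apply Finset.sum_congr rfl
          intro c hc
          rw [norm_smul, Real.norm_of_nonneg (hζ c hc)]
      _ ≤ ∑ c ∈ Ct, ζ c * ((1 + η * L) ^ m * ‖wfedPrev - wcenPrev‖ +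
            η * ∑ i ∈ Finset.range m,
              (1 + η * L) ^ (m - 1 - i) * ‖gFtilde c (W c i) - gF (W c i)‖) := by
          apply Finset.sum_le_sum
          intro c hc
          exact mul_le_mul_of_nonneg_left (key c hc m) (hζ c hc)
      _ = (1 + η * L) ^ m * ‖wfedPrev - wcenPrev‖ +
            ∑ c ∈ Ct, ζ c * (η * ∑ i ∈ Finset.range m,
              (1 + η * L) ^ (m - 1 - i) * ‖gFtilde c (W c i) - gF (W c i)‖) := by
          simp only [mul_add, Finset.sum_add_distrib, ← Finset.sum_mul, hsum, one_mul]
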